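/- Let k ∈ ℤ and let α, β : ℂ → ℂ be analytic at z with α(z) ≠ 0, k ≠ −1, and α(z)·β'(z) − α'(z)·β(z) ≠ 0. Then z + 2·(β/α)(z)/((β/α))'(z) = z + (2k+2)·α(z)·β(z)/((α·β)'(z) + k·α(z)·β'(z) − (k+2)·α'(z)·β(z)); that is, the weight-2 φ-operator of the quotient β/α coincides with the biweight φ-operator of the pair (α·β, [α,β]₁), where [α,β]₁ = k·α·β' − (k+2)·α'·β is the first Rankin–Cohen bracket of forms of weights k and k+2. -/

import Mathlib

/-!
Writing `W = α β' − α' β`, the derivative of `β/α` is `W/α²`, so `φ_{β/α} = z + 2αβ/W`.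
For weights `k` and `k + 2` the bracket satisfies `(αβ)' + [α,β]₁ = (k + 1) W`, so the
biweight operator of weight `2k + 2` gives `z + (2k + 2)αβ/((k + 1) W)`, and the factor
`k + 1` cancels.
-/

variable {𝕜 : Type*} [NontriviallyNormedField 𝕜]

noncomputable def phiOp (γ : 𝕜 → 𝕜) (z : 𝕜) : 𝕜 :=
  z + 2 * γ z / deriv γ z

noncomputable def biweightPhiOp (m : 𝕜) (A B : 𝕜 → 𝕜) (z : 𝕜) : 𝕜 :=
  z + m * A z / (deriv A z + B z)

noncomputable def rankinCohen₁ (k l : 𝕜) (α β : 𝕜 → 𝕜) (z : 𝕜) : 𝕜 :=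
  k * α z * deriv β z - l * deriv α z * β z

section

variable {α β : 𝕜 → 𝕜} {z : 𝕜}

theorem phiOp_div (hα : DifferentiableAt 𝕜 α z) (hβ : DifferentiableAt 𝕜 β z)
    (hαz : α z ≠ 0) :
    phiOp (fun w => β w / α w) z = z + 2 * α z * β z / (α z * deriv β z - deriv α z * β z) := by
  rw [phiOp, deriv_fun_div hβ hα hαz, div_div_eq_mul_div]
  congr 2
  · field_simp
  · ring

theorem deriv_mul_add_rankinCohen₁ (k : 𝕜) (hα : DifferentiableAt 𝕜 α z)
    (hβ : DifferentiableAt 𝕜 β z) :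
    deriv (fun w => α w * β w) z + rankinCohen₁ k (k + 2) α β z
      = (k + 1) * (α z * deriv β z - deriv α z * β z) := by
  rw [deriv_fun_mul hα hβ, rankinCohen₁]
  ring

theorem phiOp_div_eq_biweightPhiOp {k : 𝕜} (hk : k + 1 ≠ 0) (hα : DifferentiableAt 𝕜 α z)
    (hβ : DifferentiableAt 𝕜 β z) (hαz : α z ≠ 0) :
    phiOp (fun w => β w / α w) z
      = biweightPhiOp (2 * k + 2) (fun w => α w * β w) (rankinCohen₁ k (k + 2) α β) z := by
  rw [phiOp_div hα hβ hαz, biweightPhiOp, deriv_mul_add_rankinCohen₁ k hα hβ,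
    show (2 * k + 2) * (α z * β z) = (k + 1) * (2 * α z * β z) by ring, mul_div_mul_left _ _ hk]

end

theorem phi_quotient_eq_biweight_phi
    (k : ℤ) (α β : ℂ → ℂ) (z : ℂ)
    (hα : AnalyticAt ℂ α z) (hβ : AnalyticAt ℂ β z)
    (hαz : α z ≠ 0) (hk : k ≠ -1) :
    z + 2 * (β z / α z) / deriv (fun w => β w / α w) z
      = z + (2 * (k : ℂ) + 2) * α z * β z /
          (deriv (fun w => α w * β w) z
            + (k : ℂ) * α z * deriv β z - ((k : ℂ) + 2) * deriv α z * β z) := by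
  have hk₁ : (k : ℂ) + 1 ≠ 0 := by exact_mod_cast (by omega : k + 1 ≠ 0)
  simpa only [phiOp, biweightPhiOp, rankinCohen₁, mul_assoc, add_sub_assoc] using
    phiOp_div_eq_biweightPhiOp hk₁ hα.differentiableAt hβ.differentiableAt hαz
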